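/- arXiv:0910.0610 — 2 statements merged into one kernel-verified Lean document; each statement's English description precedes it below -/
import Mathlib

section
/- Online multitask regret with group-norm regularization: Consider k tasks over ℝ^d, and for t = 1,…,n let (X_t, y_t) be an example with X_t ∈ ℝ^{k×d} (row x_t^j ∈ ℝ^d is the instance for task j) and y_t = (y_t^1,…,y_t^k). For each task j let l^j : ℝ × 𝒴^j → ℝ be ρ-Lipschitz in its first argument, and define l_t(W) = Σ_{j=1}^k l^j(⟨w^j, x_t^j⟩, y_t^j) for W ∈ ℝ^{k×d} with rows w^j. Let d ≥ 3, let 𝒲_{2,1} = {W : ‖W‖_{2,1} ≤ W₀}, and suppose ‖X_t‖_{2,∞} ≤ X for all t. Then there is a sequence W_1, …, W_n ∈ 𝒲_{2,1}, where each W_t is determined by the examples (X_1,y_1),…,(X_{t−1},y_{t−1}) only, such that (1/n) Σ_{t=1}^n l_t(W_t) − min_{W ∈ 𝒲_{2,1}} (1/n) Σ_{t=1}^n l_t(W) ≤ C · ρ · X · W₀ · √(ln(d)/n) for a universal constant C > 0. -/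
/-!
Convexity gives `l_t(W_t) - l_t(U) ≤ ⟨V_t, W_t - U⟩` for the subgradient `V_t = Diag(τ_t) X_t`,
whose columns have Euclidean norm at most `ρ X`, so it suffices to control the regret of linear
losses on `𝒲_{2,1}`. The learner runs, in every column `c`, projected online gradient descent on
the Euclidean ball of radius `W₀`, and mixes the columns with Hedge over the linearized losses
`⟨V_tᶜ, v_tᶜ⟩`: column `c` of `W_t` is the Hedge weight of `c` times the iterate `v_tᶜ`, so
`‖W_t‖_{2,1} ≤ W₀`. By the duality of `‖·‖_{2,1}` and `‖·‖_{2,∞}`, every `U ∈ 𝒲_{2,1}` is beaten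
by `W₀` times the largest column norm of `∑_t V_t`, which is what gradient descent in that single
column competes with. The regret is therefore the Hedge regret, `O(ρ X W₀ √(n ln d))`, plus the
gradient-descent regret of one column, `O(ρ X W₀ √n)`. When `ln d > n` the trivial bound of
`2 ρ X W₀` per round is already small enough.
-/

open scoped BigOperators

/-- The Euclidean norm of the `j`-th column of a matrix. -/
noncomputable def col2 {k d : ℕ} (M : Matrix (Fin k) (Fin d) ℝ) (j : Fin d) : ℝ :=
  Real.sqrt (∑ i, M i j ^ 2)

/-- The group norm `‖M‖_{2,1} = ∑ j ‖Mʲ‖₂` (sum of Euclidean column norms). -/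
noncomputable def grpNorm21 {k d : ℕ} (M : Matrix (Fin k) (Fin d) ℝ) : ℝ :=
  ∑ j, col2 M j

open Finset Real Set
open scoped RealInnerProductSpace

section Subgradient

variable {f : ℝ → ℝ}

theorem ConvexOn.add_rightDeriv_mul_sub_le (hf : ConvexOn ℝ univ f) (a b : ℝ) :
    f a + derivWithin f (Ioi a) a * (b - a) ≤ f b := by
  have ha : a ∈ interior univ := by simp
  rcases lt_trichotomy a b with hab | rfl | hba
  · have h := hf.rightDeriv_le_slope_of_mem_interior ha (mem_univ b) hab
    rw [slope_def_field, le_div_iff₀ (sub_pos.2 hab)] at h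
    linarith
  · simp
  · have h := (hf.slope_le_leftDeriv_of_mem_interior (mem_univ b) ha hba).trans
      (hf.leftDeriv_le_rightDeriv_of_mem_interior ha)
    rw [slope_def_field, div_le_iff₀ (sub_pos.2 hba)] at h
    linarith

theorem ConvexOn.abs_rightDeriv_le (hf : ConvexOn ℝ univ f) {ρ : ℝ}
    (hlip : ∀ a b, |f a - f b| ≤ ρ * |a - b|) (a : ℝ) :
    |derivWithin f (Ioi a) a| ≤ ρ := by
  have hr := hf.add_rightDeriv_mul_sub_le a (a + 1)
  have hl := hf.add_rightDeriv_mul_sub_le a (a - 1)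
  have lr := (le_abs_self _).trans (hlip (a + 1) a)
  have ll := (le_abs_self _).trans (hlip (a - 1) a)
  norm_num at hr hl lr ll
  exact abs_le.2 ⟨by linarith, by linarith⟩

end Subgradient

section ProjectedGradient

variable {E : Type*} [NormedAddCommGroup E] [InnerProductSpace ℝ E]

noncomputable def ballProj (R : ℝ) (v : E) : E :=
  if ‖v‖ ≤ R then v else (R / ‖v‖) • v

theorem norm_ballProj_le {R : ℝ} (hR : 0 ≤ R) (v : E) : ‖ballProj R v‖ ≤ R := by
  unfold ballProj
  split_ifs with h
  · exact h
  · have hv : 0 < ‖v‖ := hR.trans_lt (not_le.1 h)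
    rw [norm_smul, norm_div, norm_norm, Real.norm_of_nonneg hR, div_mul_cancel₀ _ hv.ne']

theorem norm_ballProj_sub_le {R : ℝ} (hR : 0 ≤ R) (v : E) {u : E} (hu : ‖u‖ ≤ R) :
    ‖ballProj R v - u‖ ≤ ‖v - u‖ := by
  unfold ballProj
  split_ifs with h
  · exact le_rfl
  set c := R / ‖v‖
  have hv : 0 < ‖v‖ := hR.trans_lt (not_le.1 h)
  have hc1 : c ≤ 1 := (div_le_one hv).2 (not_le.1 h).le
  have hcv : c * ‖v‖ = R := div_mul_cancel₀ _ hv.ne'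
  -- `v - c • v` points away from the ball, so it makes an acute angle with `c • v - u`.
  have hacute : 0 ≤ ⟪v - c • v, c • v - u⟫ := by
    have hvu : ⟪v, u⟫ ≤ ‖v‖ * R := (real_inner_le_norm v u).trans (by gcongr)
    have : ⟪v - c • v, c • v - u⟫ = (1 - c) * (c * ‖v‖ ^ 2 - ⟪v, u⟫) := by
      rw [show v - c • v = (1 - c) • v by rw [sub_smul, one_smul], real_inner_smul_left,
        inner_sub_right, real_inner_smul_right, real_inner_self_eq_norm_sq]
    rw [this]
    exact mul_nonneg (by linarith) (by nlinarith)
  have hsplit : ‖v - u‖ ^ 2 = ‖v - c • v‖ ^ 2 + 2 * ⟪v - c • v, c • v - u⟫ + ‖c • v - u‖ ^ 2 := by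
    rw [← norm_add_sq_real, sub_add_sub_cancel]
  exact pow_le_pow_iff_left₀ (norm_nonneg _) (norm_nonneg _) two_ne_zero |>.1 (by
    nlinarith [sq_nonneg ‖v - c • v‖])

theorem sum_inner_le_mul_sum_norm {ι : Type*} [Fintype ι] {a : ι → E} {A : ℝ}
    (ha : ∀ i, ‖a i‖ ≤ A) (b : ι → E) : ∑ i, ⟪a i, b i⟫ ≤ A * ∑ i, ‖b i‖ := by
  rw [mul_sum]
  exact sum_le_sum fun i _ =>
    (real_inner_le_norm _ _).trans (mul_le_mul_of_nonneg_right (ha i) (norm_nonneg _))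

variable {n : ℕ} {R η G : ℝ} {g v : ℕ → E}

theorem sum_inner_sub_le_of_projected_gradient (hR : 0 ≤ R) (hη : 0 < η) (hv0 : v 0 = 0)
    (hstep : ∀ t < n, v (t + 1) = ballProj R (v t - η • g t)) (hg : ∀ t < n, ‖g t‖ ≤ G)
    {u : E} (hu : ‖u‖ ≤ R) :
    ∑ t ∈ range n, ⟪g t, v t - u⟫ ≤ R ^ 2 / (2 * η) + η * n * G ^ 2 / 2 := by
  have hdecr : ∀ t < n, ⟪g t, v t - u⟫ ≤
      (‖v t - u‖ ^ 2 - ‖v (t + 1) - u‖ ^ 2) / (2 * η) + η * G ^ 2 / 2 := by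
    intro t ht
    have hproj : ‖v (t + 1) - u‖ ≤ ‖(v t - u) - η • g t‖ := by
      rw [hstep t ht, sub_right_comm]; exact norm_ballProj_sub_le hR _ hu
    have hexpand : ‖(v t - u) - η • g t‖ ^ 2 =
        ‖v t - u‖ ^ 2 - 2 * η * ⟪g t, v t - u⟫ + η ^ 2 * ‖g t‖ ^ 2 := by
      rw [norm_sub_sq_real, real_inner_smul_right, norm_smul, Real.norm_of_nonneg hη.le,
        real_inner_comm]
      ring
    have hg2 : ‖g t‖ ^ 2 ≤ G ^ 2 := pow_le_pow_left₀ (norm_nonneg _) (hg t ht) 2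
    have hproj2 := pow_le_pow_left₀ (norm_nonneg _) hproj 2
    rw [div_add' _ _ _ (by positivity), le_div_iff₀ (by positivity)]
    nlinarith
  calc ∑ t ∈ range n, ⟪g t, v t - u⟫
      ≤ ∑ t ∈ range n, ((‖v t - u‖ ^ 2 - ‖v (t + 1) - u‖ ^ 2) / (2 * η) + η * G ^ 2 / 2) :=
        sum_le_sum fun t ht => hdecr t (mem_range.1 ht)
    _ = (‖u‖ ^ 2 - ‖v n - u‖ ^ 2) / (2 * η) + η * n * G ^ 2 / 2 := by
        rw [sum_add_distrib, ← sum_div, sum_range_sub', hv0, zero_sub, norm_neg]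
        simp only [sum_const, card_range, nsmul_eq_mul]
        ring
    _ ≤ R ^ 2 / (2 * η) + η * n * G ^ 2 / 2 := by
        gcongr
        nlinarith [norm_nonneg u, sq_nonneg ‖v n - u‖]

theorem sum_inner_add_mul_norm_sum_le_of_projected_gradient (hR : 0 ≤ R) (hη : 0 < η)
    (hv0 : v 0 = 0) (hstep : ∀ t < n, v (t + 1) = ballProj R (v t - η • g t))
    (hg : ∀ t < n, ‖g t‖ ≤ G) :
    ∑ t ∈ range n, ⟪g t, v t⟫ + R * ‖∑ t ∈ range n, g t‖ ≤
      R ^ 2 / (2 * η) + η * n * G ^ 2 / 2 := by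
  set S := ∑ t ∈ range n, g t
  have hu : ‖-((R / ‖S‖) • S)‖ ≤ R := by
    rcases eq_or_ne S 0 with hS | hS
    · simp [hS, hR]
    · rw [norm_neg, norm_smul, norm_div, norm_norm, Real.norm_of_nonneg hR,
        div_mul_cancel₀ _ (norm_ne_zero_iff.2 hS)]
  have hSu : ⟪S, -((R / ‖S‖) • S)⟫ = -(R * ‖S‖) := by
    rcases eq_or_ne S 0 with hS | hS
    · simp [hS]
    · rw [inner_neg_right, real_inner_smul_right, real_inner_self_eq_norm_sq]
      field_simp
  have h := sum_inner_sub_le_of_projected_gradient hR hη hv0 hstep hg hu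
  simp only [inner_sub_right, sum_sub_distrib, ← sum_inner] at h
  linarith

end ProjectedGradient

section Hedge

variable {ι : Type*} [Fintype ι]

noncomputable def hedgeWeight (β : ℝ) (L : ι → ℝ) (i : ι) : ℝ :=
  exp (-(β * L i)) / ∑ j, exp (-(β * L j))

noncomputable def logPartition (β : ℝ) (L : ι → ℝ) : ℝ :=
  log (∑ i, exp (-(β * L i)))

theorem exp_neg_le_one_sub_add_sq {x : ℝ} (hx : |x| ≤ 1) : exp (-x) ≤ 1 - x + x ^ 2 := by
  have := Real.abs_exp_sub_one_sub_id_le (x := -x) (by rwa [abs_neg])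
  rw [neg_sq] at this
  linarith [(abs_le.1 this).2]

theorem hedgeWeight_nonneg (β : ℝ) (L : ι → ℝ) (i : ι) : 0 ≤ hedgeWeight β L i :=
  div_nonneg (exp_pos _).le (sum_nonneg fun _ _ => (exp_pos _).le)

variable [Nonempty ι] {β M : ℝ}

theorem sum_hedgeWeight (β : ℝ) (L : ι → ℝ) : ∑ i, hedgeWeight β L i = 1 := by
  simp only [hedgeWeight]
  rw [← sum_div, div_self (sum_pos (fun i _ => exp_pos _) univ_nonempty).ne']

theorem logPartition_add_le (hβ : 0 ≤ β) (hβM : β * M ≤ 1) (L ℓ : ι → ℝ)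
    (hℓ : ∀ i, |ℓ i| ≤ M) :
    logPartition β (L + ℓ) ≤
      logPartition β L - β * ∑ i, hedgeWeight β L i * ℓ i + β ^ 2 * M ^ 2 := by
  set Z := ∑ i, exp (-(β * L i))
  have hZ : 0 < Z := sum_pos (fun i _ => exp_pos _) univ_nonempty
  have hZ' : 0 < ∑ i, exp (-(β * (L + ℓ) i)) := sum_pos (fun i _ => exp_pos _) univ_nonempty
  have hterm : ∀ i, exp (-(β * (L + ℓ) i)) ≤
      exp (-(β * L i)) * (1 - β * ℓ i + β ^ 2 * M ^ 2) := by
    intro i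
    have hβℓ : |β * ℓ i| ≤ β * M := by
      rw [abs_mul, abs_of_nonneg hβ]; exact mul_le_mul_of_nonneg_left (hℓ i) hβ
    have hsq : (β * ℓ i) ^ 2 ≤ β ^ 2 * M ^ 2 := by
      rw [← mul_pow, ← sq_abs]; exact pow_le_pow_left₀ (abs_nonneg _) hβℓ 2
    rw [Pi.add_apply, mul_add, neg_add, exp_add]
    gcongr
    linarith [exp_neg_le_one_sub_add_sq (hβℓ.trans hβM)]
  have hsum : ∑ i, exp (-(β * L i)) * (1 - β * ℓ i + β ^ 2 * M ^ 2) =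
      Z * (1 - β * ∑ i, hedgeWeight β L i * ℓ i + β ^ 2 * M ^ 2) := by
    simp only [hedgeWeight, mul_add, mul_sub, mul_one, sum_add_distrib, sum_sub_distrib,
      ← sum_mul, mul_sum]
    congr 2
    refine sum_congr rfl fun i _ => ?_
    field_simp
    rfl
  have hratio : (∑ i, exp (-(β * (L + ℓ) i))) / Z ≤
      1 - β * ∑ i, hedgeWeight β L i * ℓ i + β ^ 2 * M ^ 2 := by
    rw [div_le_iff₀ hZ, mul_comm, ← hsum]
    exact sum_le_sum fun i _ => hterm i
  have := log_le_sub_one_of_pos (div_pos hZ' hZ)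
  rw [log_div hZ'.ne' hZ.ne'] at this
  unfold logPartition
  linarith

theorem sum_hedgeWeight_mul_le (hβ : 0 < β) (hβM : β * M ≤ 1) {n : ℕ} (ℓ : ℕ → ι → ℝ)
    (hℓ : ∀ t < n, ∀ i, |ℓ t i| ≤ M) (i₀ : ι) :
    ∑ t ∈ range n, ∑ i, hedgeWeight β (fun i => ∑ s ∈ range t, ℓ s i) i * ℓ t i ≤
      ∑ t ∈ range n, ℓ t i₀ + log (Fintype.card ι) / β + β * n * M ^ 2 := by
  set L : ℕ → ι → ℝ := fun t i => ∑ s ∈ range t, ℓ s i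
  have hstep : ∀ t < n, logPartition β (L (t + 1)) - logPartition β (L t) ≤
      -(β * ∑ i, hedgeWeight β (L t) i * ℓ t i) + β ^ 2 * M ^ 2 := by
    intro t ht
    have hL : L (t + 1) = L t + ℓ t := funext fun i => sum_range_succ _ _
    rw [hL]
    linarith [logPartition_add_le hβ.le hβM (L t) (ℓ t) (hℓ t ht)]
  have htele := sum_le_sum fun t ht => hstep t (mem_range.1 ht)
  rw [sum_range_sub (fun t => logPartition β (L t)), sum_add_distrib, sum_neg_distrib,
    ← mul_sum] at htele
  have hL0 : logPartition β (L 0) = log (Fintype.card ι) := by simp [logPartition, L]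
  have hLn : -(β * L n i₀) ≤ logPartition β (L n) := by
    rw [logPartition, le_log_iff_exp_le (sum_pos (fun i _ => exp_pos _) univ_nonempty)]
    exact single_le_sum (f := fun i => exp (-(β * L n i))) (fun i _ => (exp_pos _).le)
      (mem_univ i₀)
  simp only [sum_const, card_range, nsmul_eq_mul] at htele
  refine le_of_mul_le_mul_left ?_ hβ
  rw [mul_add, mul_add, mul_div_cancel₀ _ hβ.ne']
  simp only [L] at hLn hL0 htele ⊢
  linarith

end Hedge

section Multitask

variable {k d : ℕ} {𝒴 : Fin k → Type*}

noncomputable def colVec (M : Matrix (Fin k) (Fin d) ℝ) (c : Fin d) : EuclideanSpace ℝ (Fin k) :=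
  WithLp.toLp 2 fun j => M j c

theorem norm_colVec (M : Matrix (Fin k) (Fin d) ℝ) (c : Fin d) : ‖colVec M c‖ = col2 M c := by
  simp [colVec, col2, EuclideanSpace.norm_eq]

theorem grpNorm21_eq_sum_norm_colVec (M : Matrix (Fin k) (Fin d) ℝ) :
    grpNorm21 M = ∑ c, ‖colVec M c‖ := by
  simp [grpNorm21, norm_colVec]

theorem inner_colVec (A B : Matrix (Fin k) (Fin d) ℝ) (c : Fin d) :
    ⟪colVec A c, colVec B c⟫ = ∑ j, A j c * B j c := by
  simp [colVec, PiLp.inner_apply, mul_comm]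

theorem colVec_sub (A B : Matrix (Fin k) (Fin d) ℝ) (c : Fin d) :
    colVec (A - B) c = colVec A c - colVec B c := rfl

theorem grpNorm21_sub_le (A B : Matrix (Fin k) (Fin d) ℝ) :
    grpNorm21 (A - B) ≤ grpNorm21 A + grpNorm21 B := by
  simp only [grpNorm21_eq_sum_norm_colVec, colVec_sub, ← sum_add_distrib]
  exact sum_le_sum fun c _ => norm_sub_le _ _

theorem sum_inner_colVec_le_mul_grpNorm21 {a : Fin d → EuclideanSpace ℝ (Fin k)} {A : ℝ}
    (ha : ∀ c, ‖a c‖ ≤ A) (U : Matrix (Fin k) (Fin d) ℝ) :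
    ∑ c, ⟪a c, colVec U c⟫ ≤ A * grpNorm21 U := by
  rw [grpNorm21_eq_sum_norm_colVec]
  exact sum_inner_le_mul_sum_norm ha _

noncomputable def multitaskLoss (lj : (j : Fin k) → ℝ → 𝒴 j → ℝ) (W : Matrix (Fin k) (Fin d) ℝ)
    (e : Matrix (Fin k) (Fin d) ℝ × ((j : Fin k) → 𝒴 j)) : ℝ :=
  ∑ j, lj j (W j ⬝ᵥ e.1 j) (e.2 j)

/-- The subgradient `Diag(τ) X` of `multitaskLoss lj · e` at `W`, where `τ j` is the right
derivative of the `j`-th loss at the prediction `W j ⬝ᵥ X j`. -/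
noncomputable def lossSubgrad (lj : (j : Fin k) → ℝ → 𝒴 j → ℝ) (W : Matrix (Fin k) (Fin d) ℝ)
    (e : Matrix (Fin k) (Fin d) ℝ × ((j : Fin k) → 𝒴 j)) : Matrix (Fin k) (Fin d) ℝ :=
  Matrix.diagonal (fun j => derivWithin (fun a => lj j a (e.2 j)) (Ioi (W j ⬝ᵥ e.1 j))
    (W j ⬝ᵥ e.1 j)) * e.1

variable {lj : (j : Fin k) → ℝ → 𝒴 j → ℝ}

theorem multitaskLoss_sub_le (hconv : ∀ j y, ConvexOn ℝ univ fun a => lj j a y)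
    (W U : Matrix (Fin k) (Fin d) ℝ) (e : Matrix (Fin k) (Fin d) ℝ × ((j : Fin k) → 𝒴 j)) :
    multitaskLoss lj W e - multitaskLoss lj U e ≤
      ∑ c, ⟪colVec (lossSubgrad lj W e) c, colVec (W - U) c⟫ := by
  have hj := fun j => (hconv j (e.2 j)).add_rightDeriv_mul_sub_le (W j ⬝ᵥ e.1 j) (U j ⬝ᵥ e.1 j)
  calc multitaskLoss lj W e - multitaskLoss lj U e
      ≤ ∑ j, derivWithin (fun a => lj j a (e.2 j)) (Ioi (W j ⬝ᵥ e.1 j)) (W j ⬝ᵥ e.1 j) *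
          ((W - U) j ⬝ᵥ e.1 j) := by
        rw [multitaskLoss, multitaskLoss, ← sum_sub_distrib]
        refine sum_le_sum fun j _ => ?_
        rw [show (W - U) j = W j - U j from rfl, sub_dotProduct]
        linarith [hj j]
    _ = ∑ c, ⟪colVec (lossSubgrad lj W e) c, colVec (W - U) c⟫ := by
        simp only [inner_colVec, lossSubgrad, Matrix.diagonal_mul, dotProduct, mul_sum]
        rw [sum_comm]
        exact sum_congr rfl fun j _ => sum_congr rfl fun c _ => by ring

theorem norm_colVec_lossSubgrad_le (hconv : ∀ j y, ConvexOn ℝ univ fun a => lj j a y) {ρ : ℝ}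
    (hρ : 0 ≤ ρ) (hlip : ∀ j y a b, |lj j a y - lj j b y| ≤ ρ * |a - b|)
    (W : Matrix (Fin k) (Fin d) ℝ) (e : Matrix (Fin k) (Fin d) ℝ × ((j : Fin k) → 𝒴 j))
    (c : Fin d) : ‖colVec (lossSubgrad lj W e) c‖ ≤ ρ * col2 e.1 c := by
  set τ := fun j => derivWithin (fun a => lj j a (e.2 j)) (Ioi (W j ⬝ᵥ e.1 j)) (W j ⬝ᵥ e.1 j)
  have hτ : ∀ j, |τ j| ≤ ρ := fun j => (hconv j (e.2 j)).abs_rightDeriv_le (hlip j (e.2 j)) _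
  rw [norm_colVec, col2, col2, ← sqrt_sq hρ, ← sqrt_mul (sq_nonneg ρ), mul_sum]
  refine sqrt_le_sqrt (sum_le_sum fun j _ => ?_)
  rw [lossSubgrad, Matrix.diagonal_mul, mul_pow]
  exact mul_le_mul_of_nonneg_right (sq_le_sq.2 ((hτ j).trans (le_abs_self ρ))) (sq_nonneg _)

end Multitask

structure MultitaskState (k d : ℕ) where
  iterate : Fin d → EuclideanSpace ℝ (Fin k)
  cumLoss : Fin d → ℝ

namespace MultitaskState

variable {k d : ℕ} {𝒴 : Fin k → Type*} {lj : (j : Fin k) → ℝ → 𝒴 j → ℝ} {β η W₀ : ℝ}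

noncomputable def play (β : ℝ) (S : MultitaskState k d) : Matrix (Fin k) (Fin d) ℝ :=
  fun j c => hedgeWeight β S.cumLoss c * S.iterate c j

noncomputable def step (lj : (j : Fin k) → ℝ → 𝒴 j → ℝ) (β η W₀ : ℝ) (S : MultitaskState k d)
    (e : Matrix (Fin k) (Fin d) ℝ × ((j : Fin k) → 𝒴 j)) : MultitaskState k d :=
  let g := colVec (lossSubgrad lj (S.play β) e)
  ⟨fun c => ballProj W₀ (S.iterate c - η • g c), fun c => S.cumLoss c + ⟪g c, S.iterate c⟫⟩

noncomputable def run (lj : (j : Fin k) → ℝ → 𝒴 j → ℝ) (β η W₀ : ℝ) {t : ℕ}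
    (h : Fin t → Matrix (Fin k) (Fin d) ℝ × ((j : Fin k) → 𝒴 j)) : MultitaskState k d :=
  Fin.foldl t (fun S i => S.step lj β η W₀ (h i)) ⟨0, 0⟩

theorem run_succ (e : ℕ → Matrix (Fin k) (Fin d) ℝ × ((j : Fin k) → 𝒴 j)) (t : ℕ) :
    run lj β η W₀ (fun i : Fin (t + 1) => e i) =
      (run lj β η W₀ (fun i : Fin t => e i)).step lj β η W₀ (e t) :=
  Fin.foldl_succ_last _ _

theorem norm_iterate_run_le (hW₀ : 0 ≤ W₀) {t : ℕ}
    (h : Fin t → Matrix (Fin k) (Fin d) ℝ × ((j : Fin k) → 𝒴 j)) (c : Fin d) :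
    ‖(run lj β η W₀ h).iterate c‖ ≤ W₀ := by
  cases t with
  | zero => simpa [run] using hW₀
  | succ t => rw [run, Fin.foldl_succ_last]; exact norm_ballProj_le hW₀ _

theorem cumLoss_run (e : ℕ → Matrix (Fin k) (Fin d) ℝ × ((j : Fin k) → 𝒴 j)) (t : ℕ) (c : Fin d) :
    (run lj β η W₀ (fun i : Fin t => e i)).cumLoss c =
      ∑ s ∈ range t,
        ⟪colVec (lossSubgrad lj ((run lj β η W₀ (fun i : Fin s => e i)).play β) (e s)) c,
          (run lj β η W₀ (fun i : Fin s => e i)).iterate c⟫ := by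
  induction t with
  | zero => rfl
  | succ t ih => rw [run_succ, sum_range_succ, ← ih]; rfl

theorem colVec_play (S : MultitaskState k d) (c : Fin d) :
    colVec (S.play β) c = hedgeWeight β S.cumLoss c • S.iterate c := by
  ext j
  simp [colVec, play]

theorem grpNorm21_play_le [NeZero d] {S : MultitaskState k d} (hS : ∀ c, ‖S.iterate c‖ ≤ W₀) :
    grpNorm21 (S.play β) ≤ W₀ := by
  rw [grpNorm21_eq_sum_norm_colVec]
  calc ∑ c, ‖colVec (S.play β) c‖ ≤ ∑ c, hedgeWeight β S.cumLoss c * W₀ := by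
        refine sum_le_sum fun c _ => ?_
        rw [colVec_play, norm_smul, Real.norm_of_nonneg (hedgeWeight_nonneg _ _ _)]
        exact mul_le_mul_of_nonneg_left (hS c) (hedgeWeight_nonneg _ _ _)
    _ = W₀ := by rw [← sum_mul, sum_hedgeWeight, one_mul]

theorem multitaskLoss_play_sub_le (hconv : ∀ j y, ConvexOn ℝ univ fun a => lj j a y)
    (S : MultitaskState k d) (e : Matrix (Fin k) (Fin d) ℝ × ((j : Fin k) → 𝒴 j))
    (U : Matrix (Fin k) (Fin d) ℝ) :
    multitaskLoss lj (S.play β) e - multitaskLoss lj U e ≤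
      ∑ c, hedgeWeight β S.cumLoss c * ⟪colVec (lossSubgrad lj (S.play β) e) c, S.iterate c⟫ -
        ∑ c, ⟪colVec (lossSubgrad lj (S.play β) e) c, colVec U c⟫ := by
  refine (multitaskLoss_sub_le hconv _ U e).trans_eq ?_
  simp only [colVec_sub, inner_sub_right, sum_sub_distrib, colVec_play, real_inner_smul_right]

end MultitaskState

theorem tuned_bound_le {a W₀ D n : ℝ} (ha : 0 < a) (hW₀ : 0 < W₀) (hD : 1 ≤ D) (hn : 0 < n) :
    W₀ ^ 2 / (2 * (W₀ / (a * √n))) + W₀ / (a * √n) * n * a ^ 2 / 2 +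
      (D / (√(D / n) / (a * W₀)) + √(D / n) / (a * W₀) * n * (a * W₀) ^ 2) ≤
      3 * (a * W₀) * (n * √(D / n)) := by
  obtain ⟨s, hs, rfl⟩ : ∃ s, 0 < s ∧ n = s ^ 2 := ⟨√n, sqrt_pos.2 hn, (sq_sqrt hn.le).symm⟩
  obtain ⟨q, hq, rfl⟩ : ∃ q, 1 ≤ q ∧ D = q ^ 2 :=
    ⟨√D, one_le_sqrt.2 hD, (sq_sqrt (by linarith)).symm⟩
  rw [sqrt_sq hs.le, ← div_pow, sqrt_sq (by positivity)]
  field_simp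
  nlinarith [mul_pos ha hW₀, mul_pos (mul_pos ha hW₀) hs]

theorem one_le_log_of_three_le {d : ℕ} (hd : 3 ≤ d) : 1 ≤ log d := by
  rw [le_log_iff_exp_le (by positivity)]
  calc exp 1 ≤ 3 := exp_one_lt_d9.le.trans (by norm_num)
    _ ≤ d := by exact_mod_cast hd

section Regret

open MultitaskState

variable {k d : ℕ} [NeZero d] {𝒴 : Fin k → Type*} {lj : (j : Fin k) → ℝ → 𝒴 j → ℝ}
  {ρ X W₀ : ℝ}

theorem multitaskLoss_sub_le_of_grpNorm21_le (hconv : ∀ j y, ConvexOn ℝ univ fun a => lj j a y)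
    (hlip : ∀ j y a b, |lj j a y - lj j b y| ≤ ρ * |a - b|) (hρ : 0 ≤ ρ)
    {e : Matrix (Fin k) (Fin d) ℝ × ((j : Fin k) → 𝒴 j)} (hX : ∀ c, col2 e.1 c ≤ X)
    {W U : Matrix (Fin k) (Fin d) ℝ} (hW : grpNorm21 W ≤ W₀) (hU : grpNorm21 U ≤ W₀) :
    multitaskLoss lj W e - multitaskLoss lj U e ≤ 2 * (ρ * X * W₀) := by
  have hX0 : 0 ≤ X := (sqrt_nonneg _).trans (hX 0)
  calc multitaskLoss lj W e - multitaskLoss lj U e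
      ≤ ∑ c, ⟪colVec (lossSubgrad lj W e) c, colVec (W - U) c⟫ := multitaskLoss_sub_le hconv W U e
    _ ≤ ρ * X * grpNorm21 (W - U) := sum_inner_colVec_le_mul_grpNorm21 (fun c =>
          (norm_colVec_lossSubgrad_le hconv hρ hlip W e c).trans
            (mul_le_mul_of_nonneg_left (hX c) hρ)) _
    _ ≤ ρ * X * (W₀ + W₀) :=
        mul_le_mul_of_nonneg_left ((grpNorm21_sub_le W U).trans (add_le_add hW hU))
          (mul_nonneg hρ hX0)
    _ = 2 * (ρ * X * W₀) := by ring

theorem sum_multitaskLoss_run_sub_le (hconv : ∀ j y, ConvexOn ℝ univ fun a => lj j a y)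
    (hlip : ∀ j y a b, |lj j a y - lj j b y| ≤ ρ * |a - b|) (hρ : 0 ≤ ρ) (hW₀ : 0 ≤ W₀)
    {β η : ℝ} (hβ : 0 < β) (hη : 0 < η) (hβM : β * (ρ * X * W₀) ≤ 1) {n : ℕ}
    (e : ℕ → Matrix (Fin k) (Fin d) ℝ × ((j : Fin k) → 𝒴 j))
    (hX : ∀ t < n, ∀ c, col2 (e t).1 c ≤ X) {U : Matrix (Fin k) (Fin d) ℝ}
    (hU : grpNorm21 U ≤ W₀) :
    ∑ t ∈ range n, (multitaskLoss lj ((run lj β η W₀ fun i : Fin t => e i).play β) (e t) -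
        multitaskLoss lj U (e t)) ≤
      W₀ ^ 2 / (2 * η) + η * n * (ρ * X) ^ 2 / 2 + (log d / β + β * n * (ρ * X * W₀) ^ 2) := by
  set S := fun t : ℕ => run lj β η W₀ fun i : Fin t => e i
  set g := fun t c => colVec (lossSubgrad lj ((S t).play β) (e t)) c
  set ℓ := fun t c => ⟪g t c, (S t).iterate c⟫
  set G := fun c => ∑ t ∈ range n, g t c
  have hg : ∀ t < n, ∀ c, ‖g t c‖ ≤ ρ * X := fun t ht c =>
    (norm_colVec_lossSubgrad_le hconv hρ hlip _ _ c).trans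
      (mul_le_mul_of_nonneg_left (hX t ht c) hρ)
  have hℓ : ∀ t < n, ∀ c, |ℓ t c| ≤ ρ * X * W₀ := fun t ht c =>
    (abs_real_inner_le_norm _ _).trans (mul_le_mul (hg t ht c) (norm_iterate_run_le hW₀ _ c)
      (norm_nonneg _) ((norm_nonneg _).trans (hg t ht c)))
  have hlin : ∀ t, multitaskLoss lj ((S t).play β) (e t) - multitaskLoss lj U (e t) ≤
      ∑ c, hedgeWeight β (fun c => ∑ s ∈ range t, ℓ s c) c * ℓ t c -
        ∑ c, ⟪g t c, colVec U c⟫ := by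
    intro t
    have h := multitaskLoss_play_sub_le (β := β) hconv (S t) (e t) U
    rwa [show (S t).cumLoss = fun c => ∑ s ∈ range t, ℓ s c from funext (cumLoss_run e t)] at h
  obtain ⟨c₀, -, hc₀⟩ := exists_max_image univ (fun c => ‖G c‖) univ_nonempty
  have hhedge := sum_hedgeWeight_mul_le hβ hβM ℓ hℓ c₀
  have hogd := sum_inner_add_mul_norm_sum_le_of_projected_gradient hW₀ hη
    (g := fun t => g t c₀) (v := fun t => (S t).iterate c₀) rfl
    (fun t _ => by simp only [S, run_succ]; rfl) (fun t ht => hg t ht c₀)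
  have hcomp : -∑ t ∈ range n, ∑ c, ⟪g t c, colVec U c⟫ ≤ W₀ * ‖G c₀‖ := by
    rw [sum_comm, ← sum_neg_distrib]
    simp_rw [← sum_inner, ← inner_neg_left]
    calc ∑ c, ⟪-G c, colVec U c⟫ ≤ ‖G c₀‖ * grpNorm21 U :=
          sum_inner_colVec_le_mul_grpNorm21
            (fun c => (norm_neg (G c)).trans_le (hc₀ c (mem_univ c))) U
      _ ≤ W₀ * ‖G c₀‖ := by
          rw [mul_comm]
          exact mul_le_mul_of_nonneg_right hU (norm_nonneg _)
  rw [Fintype.card_fin] at hhedge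
  calc _ ≤ ∑ t ∈ range n, (∑ c, hedgeWeight β (fun c => ∑ s ∈ range t, ℓ s c) c * ℓ t c -
        ∑ c, ⟪g t c, colVec U c⟫) := sum_le_sum fun t _ => hlin t
    _ ≤ _ := by
        rw [sum_sub_distrib]
        linarith

theorem sum_multitaskLoss_run_sub_le_tuned (hconv : ∀ j y, ConvexOn ℝ univ fun a => lj j a y)
    (hlip : ∀ j y a b, |lj j a y - lj j b y| ≤ ρ * |a - b|) (hρ : 0 ≤ ρ) (hX0 : 0 < X)
    (hW₀ : 0 < W₀) (hd : 3 ≤ d) {n : ℕ} (hn : 0 < n)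
    (e : ℕ → Matrix (Fin k) (Fin d) ℝ × ((j : Fin k) → 𝒴 j))
    (hX : ∀ t < n, ∀ c, col2 (e t).1 c ≤ X) {U : Matrix (Fin k) (Fin d) ℝ}
    (hU : grpNorm21 U ≤ W₀) :
    let β := √(log d / n) / (ρ * X * W₀)
    ∑ t ∈ range n, (multitaskLoss lj
        ((run lj β (W₀ / (ρ * X * √n)) W₀ fun i : Fin t => e i).play β) (e t) -
        multitaskLoss lj U (e t)) ≤ 3 * (ρ * X * W₀) * (n * √(log d / n)) := by
  intro β
  have hn' : (0 : ℝ) < n := by exact_mod_cast hn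
  by_cases hmain : 0 < ρ ∧ log d ≤ n
  · obtain ⟨hρ, hdn⟩ := hmain
    have hβM : β * (ρ * X * W₀) ≤ 1 := by
      rw [div_mul_cancel₀ _ (by positivity), sqrt_le_one, div_le_one hn']
      exact hdn
    have hD := one_le_log_of_three_le hd
    refine (sum_multitaskLoss_run_sub_le hconv hlip hρ.le hW₀.le (by positivity)
      (by positivity) hβM e hX hU).trans ?_
    exact tuned_bound_le (by positivity) hW₀ hD hn'
  · -- otherwise the bound exceeds the trivial regret `2 ρ X W₀` per round
    have htriv : 2 * (ρ * X * W₀) ≤ 3 * (ρ * X * W₀) * √(log d / n) := by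
      rcases hρ.eq_or_lt with rfl | hρ'
      · simp
      · have : 1 ≤ √(log d / n) := one_le_sqrt.2 ((one_le_div hn').2 (not_le.1 (hmain ⟨hρ', ·⟩)).le)
        nlinarith [mul_pos (mul_pos hρ' hX0) hW₀]
    calc _ ≤ ∑ t ∈ range n, 2 * (ρ * X * W₀) := sum_le_sum fun t ht =>
          multitaskLoss_sub_le_of_grpNorm21_le hconv hlip hρ (hX t (mem_range.1 ht))
            (grpNorm21_play_le fun c => norm_iterate_run_le hW₀.le _ c) hU
      _ ≤ 3 * (ρ * X * W₀) * (n * √(log d / n)) := by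
          rw [sum_const, card_range, nsmul_eq_mul]
          nlinarith

end Regret

/-- Online multitask learning with group-norm regularization: `k` tasks over `ℝ^d`, `d ≥ 3`.
Each example is a matrix `X_t ∈ ℝ^{k×d}` of per-task instances (rows) together with labels
`y_t^j`; the loss of `W` is `l_t(W) = ∑_j l^j(⟨w^j, x_t^j⟩, y_t^j)` where each `l^j` is
convex and `ρ`-Lipschitz in its first argument.  For a universal constant `C > 0` there is
an online algorithm — each play depending only on previously seen examples — whose iterates
stay in `𝒲_{2,1} = {W : ‖W‖_{2,1} ≤ W₀}` and whose average regret against any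
`U ∈ 𝒲_{2,1}` is at most `C · ρ · X · W₀ · √(ln d / n)` whenever `‖X_t‖_{2,∞} ≤ X`. -/
theorem stmt16 :
    ∃ C : ℝ, 0 < C ∧
      ∀ (k d : ℕ), 1 ≤ k → 3 ≤ d →
      ∀ (𝒴 : Fin k → Type) (lj : (j : Fin k) → ℝ → 𝒴 j → ℝ) (ρ : ℝ),
        (∀ (j : Fin k) (y : 𝒴 j) (a b : ℝ), |lj j a y - lj j b y| ≤ ρ * |a - b|) →
        (∀ (j : Fin k) (y : 𝒴 j), ConvexOn ℝ Set.univ fun a : ℝ => lj j a y) →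
      ∀ (W₀ X : ℝ), 0 < W₀ → 0 < X →
      ∀ (n : ℕ), 0 < n →
      ∃ A : (t : ℕ) → (Fin t → Matrix (Fin k) (Fin d) ℝ × ((j : Fin k) → 𝒴 j)) →
          Matrix (Fin k) (Fin d) ℝ,
        ∀ ex : Fin n → Matrix (Fin k) (Fin d) ℝ × ((j : Fin k) → 𝒴 j),
          (∀ (t : Fin n) (c : Fin d), col2 (ex t).1 c ≤ X) →
          (∀ t : Fin n,
              grpNorm21 (A t.1 fun s : Fin t.1 => ex (Fin.castLE t.isLt.le s)) ≤ W₀) ∧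
            ∀ U : Matrix (Fin k) (Fin d) ℝ, grpNorm21 U ≤ W₀ →
              (1 / n : ℝ) * (∑ t : Fin n, ∑ j,
                    lj j (∑ c, (A t.1 fun s : Fin t.1 => ex (Fin.castLE t.isLt.le s)) j c
                        * (ex t).1 j c)
                      ((ex t).2 j))
                  - (1 / n : ℝ) * (∑ t : Fin n, ∑ j,
                    lj j (∑ c, U j c * (ex t).1 j c) ((ex t).2 j)) ≤
                C * ρ * X * W₀ * Real.sqrt (Real.log d / n) := by
  refine ⟨3, by norm_num, fun k d hk hd 𝒴 lj ρ hlip hconv W₀ X hW₀ hX n hn => ?_⟩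
  set β := √(log d / n) / (ρ * X * W₀)
  refine ⟨fun t h => (MultitaskState.run lj β (W₀ / (ρ * X * √n)) W₀ h).play β,
    fun ex hex => ?_⟩
  have : NeZero n := ⟨hn.ne'⟩
  have : NeZero d := ⟨by omega⟩
  set e : ℕ → Matrix (Fin k) (Fin d) ℝ × ((j : Fin k) → 𝒴 j) := fun t => ex (Fin.ofNat n t)
  have hex_eq : ∀ t : Fin n, ex t = e t := fun t => by simp only [e, Fin.ofNat_val_eq_self]
  have hρ : 0 ≤ ρ := (abs_nonneg _).trans (by simpa using hlip ⟨0, hk⟩ ((ex 0).2 ⟨0, hk⟩) 1 0)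
  simp only [hex_eq]
  refine ⟨fun t => MultitaskState.grpNorm21_play_le fun c =>
    MultitaskState.norm_iterate_run_le hW₀.le _ c, fun U hU => ?_⟩
  have hregret := sum_multitaskLoss_run_sub_le_tuned hconv hlip hρ hX hW₀ hd hn e
    (fun t ht c => hex_eq ⟨t, ht⟩ ▸ hex ⟨t, ht⟩ c) hU
  calc _ = (1 / n : ℝ) * ∑ t ∈ range n, (multitaskLoss lj
          ((MultitaskState.run lj β (W₀ / (ρ * X * √n)) W₀ fun i : Fin t => e i).play β) (e t) -
          multitaskLoss lj U (e t)) := by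
        rw [sum_sub_distrib, mul_sub, ← Fin.sum_univ_eq_sum_range, ← Fin.sum_univ_eq_sum_range]
        rfl
    _ ≤ (1 / n : ℝ) * (3 * (ρ * X * W₀) * (n * √(log d / n))) :=
        mul_le_mul_of_nonneg_left hregret (by positivity)
    _ = 3 * ρ * X * W₀ * √(log d / n) := by field_simp
end

section
/- Kernel-learning Rademacher bound (finite-sample form): Let G_1, …, G_k be n×n real symmetric positive semidefinite matrices (the Gram matrices of k base kernels on a training set of n points) with all diagonal entries (G_j)_{ii} ≤ B, let γ > 0, and let k ≥ 2. Define the set 𝒱 = { Gα ∈ ℝ^n : G = Σ_{j=1}^k μ_j G_j with μ_j ≥ 0 and Σ_j μ_j = 1, α ∈ ℝ^n with αᵀGα ≤ 1/γ² }. Then E[sup_{v ∈ 𝒱} (1/n) Σ_{i=1}^n ε_i v_i] ≤ e·√(B ln(k)/(γ² n)), where ε_1,…,ε_n are i.i.d. uniform ±1 random variables. -/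
open scoped BigOperators
open Matrix Finset Real

/-!
Fix a sign vector `σ` and write `G = ∑ j, μ j • G j`. Cauchy–Schwarz for the PSD form `G` gives
`σ ⬝ᵥ G *ᵥ α ≤ √(σᵀGσ) √(αᵀGα) ≤ √(maxⱼ σᵀGⱼσ) / γ`, because `σᵀGσ` is a convex combination of
the `σᵀGⱼσ`. Averaging over `σ` and using Jensen, it remains to bound `E maxⱼ σᵀGⱼσ`, whose
`r`-th power is at most `∑ⱼ E (σᵀGⱼσ)^r`. Writing `Gⱼ = ∑ₘ vₘ vₘᵀ`, we have `σᵀGⱼσ = ∑ₘ (vₘ ⬝ᵥ σ)²`,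
and Radon's inequality reduces its `r`-th moment to the Khintchine bound
`E (v ⬝ᵥ σ)^(2r) ≤ 2 (2r/e)^r ‖v‖^(2r)`, a consequence of the sub-Gaussian bound
`E exp (t v ⬝ᵥ σ) ≤ exp (t² ‖v‖² / 2)`. Hence
`E (σᵀGⱼσ)^r ≤ 2 (2r/e)^r (tr Gⱼ)^r ≤ 2 (2r/e)^r (nB)^r`, and `r = ⌊log₂ k⌋ + 1` makes
`k · 2 (2r/e)^r ≤ (e² ln k)^r`.
-/

theorem pow_le_div_exp_pow_mul_exp (m : ℕ) {x : ℝ} (hx : 0 ≤ x) :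
    x ^ m ≤ (m / exp 1) ^ m * exp x := by
  rcases m.eq_zero_or_pos with rfl | hm
  · simpa using one_le_exp hx
  have hm' : (0 : ℝ) < m := by exact_mod_cast hm
  have h : (x / m) ^ m ≤ exp (x / m - 1) ^ m := by
    gcongr
    linarith [add_one_le_exp (x / m - 1)]
  rw [← exp_nat_mul, mul_sub, mul_div_cancel₀ _ hm'.ne', mul_one, exp_sub, div_pow,
    div_le_div_iff₀ (by positivity) (exp_pos _)] at h
  rw [div_pow, ← exp_nat_mul, mul_one, div_mul_eq_mul_div, le_div_iff₀ (exp_pos _)]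
  linarith

theorem pow_two_mul_le_mul_exp_add_exp_neg (r : ℕ) (y : ℝ) :
    y ^ (2 * r) ≤ (2 * r / exp 1) ^ (2 * r) * (exp y + exp (-y)) := by
  have h := pow_le_div_exp_pow_mul_exp (2 * r) (abs_nonneg y)
  rw [pow_abs, abs_of_nonneg ((even_two_mul r).pow_nonneg _), Nat.cast_mul, Nat.cast_two] at h
  refine h.trans (mul_le_mul_of_nonneg_left ?_ (by positivity))
  rcases abs_cases y with ⟨h, -⟩ | ⟨h, -⟩ <;> rw [h]
  · linarith [exp_pos (-y)]
  · linarith [exp_pos y]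

theorem expect_pow_two_mul_le_of_expect_exp_le {α : Type*} [Fintype α] (X : α → ℝ) {c : ℝ}
    (hc : 0 < c) (hX : ∀ t, 𝔼 x, exp (t * X x) ≤ exp (t ^ 2 * c / 2)) (r : ℕ) :
    𝔼 x, X x ^ (2 * r) ≤ 2 * (2 * r / exp 1) ^ r * c ^ r := by
  -- Markov-type comparison with `exp (± t X)` at the optimal `t`
  set t := √(2 * r / c)
  have ht : t ^ 2 = 2 * r / c := sq_sqrt (by positivity)
  have hmoment : t ^ (2 * r) * 𝔼 x, X x ^ (2 * r) ≤
      (2 * r / exp 1) ^ (2 * r) * (2 * exp (t ^ 2 * c / 2)) := by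
    rw [mul_expect]
    calc 𝔼 x, t ^ (2 * r) * X x ^ (2 * r)
        ≤ 𝔼 x, (2 * r / exp 1) ^ (2 * r) * (exp (t * X x) + exp (-(t * X x))) :=
          expect_le_expect fun x _ => by
            rw [← mul_pow]; exact pow_two_mul_le_mul_exp_add_exp_neg r (t * X x)
      _ ≤ _ := by
          rw [← mul_expect, expect_add_distrib]
          have := hX (-t)
          simp only [neg_sq, neg_mul] at this
          gcongr
          linarith [hX t]
  rw [show t ^ 2 * c / 2 = r by rw [ht]; field_simp, pow_mul, ht, ← mul_one (r : ℝ), exp_nat_mul,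
    mul_one, pow_mul] at hmoment
  rcases r.eq_zero_or_pos with rfl | hr
  · simpa using hmoment
  have hne : (2 * r / c : ℝ) ^ r ≠ 0 := by positivity
  have h : (2 * r / exp 1) ^ r * exp 1 ^ r = (2 * r / c) ^ r * c ^ r := by
    rw [← mul_pow, ← mul_pow, div_mul_cancel₀ _ (exp_pos 1).ne', div_mul_cancel₀ _ hc.ne']
  rw [← le_div_iff₀' (by positivity)] at hmoment
  refine hmoment.trans_eq ?_
  rw [div_eq_iff hne, ← pow_mul, mul_comm 2 r, pow_mul]
  linear_combination (2 * (2 * r / exp 1) ^ r) * h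

/-- Radon's inequality. -/
theorem pow_sum_le_sum_pow_mul_sum_pow_div {κ : Type*} (s : Finset κ) {w y : κ → ℝ}
    (hw : ∀ i ∈ s, 0 ≤ w i) (hy : ∀ i ∈ s, 0 ≤ y i) (hyw : ∀ i ∈ s, w i = 0 → y i = 0)
    (r : ℕ) :
    (∑ i ∈ s, y i) ^ (r + 1) ≤ (∑ i ∈ s, w i) ^ r * ∑ i ∈ s, y i ^ (r + 1) / w i ^ r := by
  set W := ∑ i ∈ s, w i
  have hW : 0 ≤ W := sum_nonneg hw
  rcases hW.eq_or_lt with hW0 | hWpos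
  · have : ∑ i ∈ s, y i = 0 := sum_eq_zero fun i hi =>
      hyw i hi ((sum_eq_zero_iff_of_nonneg hw).1 hW0.symm i hi)
    rw [this, zero_pow r.succ_ne_zero]
    exact mul_nonneg (pow_nonneg hW r)
      (sum_nonneg fun i hi => by have := hw i hi; have := hy i hi; positivity)
  -- Jensen for `z ↦ z ^ (r + 1)` with weights `w i / W` at the points `y i / w i`
  have hJ := Real.pow_arith_mean_le_arith_mean_pow s (fun i => w i / W) (fun i => y i / w i)
    (fun i hi => div_nonneg (hw i hi) hW) (by rw [← sum_div, div_self hWpos.ne'])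
    (fun i hi => div_nonneg (hy i hi) (hw i hi)) (r + 1)
  have h1 : ∀ i ∈ s, w i / W * (y i / w i) = y i / W := fun i hi => by
    rcases eq_or_ne (w i) 0 with h | h
    · simp [h, hyw i hi h]
    · field_simp
  have h2 : ∀ i ∈ s, w i / W * (y i / w i) ^ (r + 1) = y i ^ (r + 1) / w i ^ r / W :=
    fun i hi => by
      rcases eq_or_ne (w i) 0 with h | h
      · simp [h, hyw i hi h]
      · rw [div_pow, pow_succ (w i)]
        field_simp
  rw [sum_congr rfl h1, sum_congr rfl h2, ← sum_div, ← sum_div, div_pow,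
    div_le_div_iff₀ (by positivity) hWpos, pow_succ W r] at hJ
  exact le_of_mul_le_mul_right (hJ.trans_eq (by ring)) hWpos

theorem pow_expect_le_expect_pow {α : Type*} [Fintype α] [Nonempty α] {X : α → ℝ}
    (hX : ∀ x, 0 ≤ X x) (r : ℕ) : (𝔼 x, X x) ^ r ≤ 𝔼 x, X x ^ r := by
  have hN : (0 : ℝ) < Fintype.card α := by exact_mod_cast Fintype.card_pos
  have h := Real.pow_arith_mean_le_arith_mean_pow univ (fun _ => 1 / (Fintype.card α : ℝ)) X
    (fun _ _ => by positivity) (by simp [hN.ne']) (fun x _ => hX x) r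
  simpa only [Fintype.expect_eq_sum_div_card, sum_div, one_div, inv_mul_eq_div] using h

theorem expect_sqrt_le_sqrt_expect {α : Type*} [Fintype α] [Nonempty α] {X : α → ℝ}
    (hX : ∀ x, 0 ≤ X x) : 𝔼 x, √(X x) ≤ √(𝔼 x, X x) := by
  refine le_sqrt_of_sq_le ((pow_expect_le_expect_pow (fun x => sqrt_nonneg _) 2).trans ?_)
  simp only [sq_sqrt (hX _), le_refl]

theorem pow_expect_iSup_le {α κ : Type*} [Fintype α] [Nonempty α] [Fintype κ] [Nonempty κ]
    {q : κ → α → ℝ} (hq : ∀ j x, 0 ≤ q j x) (r : ℕ) :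
    (𝔼 x, ⨆ j, q j x) ^ r ≤ ∑ j, 𝔼 x, q j x ^ r := by
  have hmax : ∀ x, (⨆ j, q j x) ^ r ≤ ∑ j, q j x ^ r := fun x => by
    obtain ⟨j, hj⟩ := exists_eq_ciSup_of_finite (f := fun j => q j x)
    rw [← hj]
    exact single_le_sum (fun j _ => pow_nonneg (hq j x) r) (mem_univ j)
  rw [← expect_sum_comm]
  exact (pow_expect_le_expect_pow (fun x => iSup_nonneg fun j => hq j x) r).trans
    (expect_le_expect fun x _ => hmax x)

theorem exists_mul_pow_le_pow_log {k : ℕ} (hk : 2 ≤ k) :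
    ∃ r : ℕ, 0 < r ∧ k * (2 * (2 * r / exp 1) ^ r) ≤ (exp 1 ^ 2 * log k) ^ r := by
  set m := Nat.log 2 k
  have hm : 1 ≤ m := Nat.le_log_of_pow_le one_lt_two (by simpa using hk)
  refine ⟨m + 1, m.succ_pos, ?_⟩
  set r := m + 1
  have hr : (2 : ℝ) ≤ r := by norm_cast; omega
  have hkr : (k : ℝ) ≤ 2 ^ r := by exact_mod_cast (Nat.lt_pow_succ_log_self one_lt_two k).le
  have hlog : r / 2 * log 2 ≤ log k := by
    have : (r : ℝ) / 2 ≤ m := by rw [div_le_iff₀ two_pos]; norm_cast; omega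
    calc r / 2 * log 2 ≤ m * log 2 := by gcongr
      _ = log ((2 : ℕ) ^ m : ℕ) := by push_cast; rw [log_pow]
      _ ≤ log k := log_le_log (by positivity) (by exact_mod_cast Nat.pow_log_le_self 2 (by omega))
  -- the two sides differ by the factor `(e³ log 2 / 8) ^ r / 2`, and `e³ log 2 / 8 > 1.7`
  have hβ : (2 : ℝ) ≤ (exp 1 ^ 3 * log 2 / 8) ^ r := by
    have he : (2.718 : ℝ) ≤ exp 1 := by linarith [exp_one_gt_d9]
    have hβ' : (1.7 : ℝ) ≤ exp 1 ^ 3 * log 2 / 8 := by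
      have : (2.718 : ℝ) ^ 3 ≤ exp 1 ^ 3 := by gcongr
      nlinarith [log_two_gt_d9]
    calc (2 : ℝ) ≤ 1.7 ^ 2 := by norm_num
      _ ≤ 1.7 ^ r := pow_le_pow_right₀ (by norm_num) (by exact_mod_cast hr)
      _ ≤ _ := by gcongr
  calc (k : ℝ) * (2 * (2 * r / exp 1) ^ r) ≤ 2 ^ r * (2 * (2 * r / exp 1) ^ r) := by gcongr
    _ = (4 * r / exp 1) ^ r * 2 := by
        rw [show (4 * r / exp 1 : ℝ) = 2 * (2 * r / exp 1) by ring, mul_pow]; ring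
    _ ≤ (4 * r / exp 1) ^ r * (exp 1 ^ 3 * log 2 / 8) ^ r := by gcongr
    _ = (exp 1 ^ 2 * (r / 2 * log 2)) ^ r := by
        rw [← mul_pow]; congr 1; field_simp; ring
    _ ≤ (exp 1 ^ 2 * log k) ^ r := by gcongr

def signVec {ι : Type*} (s : ι → Bool) (i : ι) : ℝ := if s i then 1 else -1

section

variable {ι : Type*} [Fintype ι]

theorem dotProduct_sum_vecMulVec_self_mulVec {m : Type*} [Fintype m] (v : m → ι → ℝ)
    (x y : ι → ℝ) :
    x ⬝ᵥ (∑ i, vecMulVec (v i) (v i)) *ᵥ y = ∑ i, (x ⬝ᵥ v i) * (v i ⬝ᵥ y) := by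
  simp [sum_mulVec, vecMulVec_mulVec, dotProduct_sum, mul_comm]

theorem Matrix.PosSemidef.exists_eq_sum_vecMulVec_self {M : Matrix ι ι ℝ} (hM : M.PosSemidef) :
    ∃ (m : ℕ) (v : Fin m → ι → ℝ), M = ∑ i, vecMulVec (v i) (v i) := by
  simpa using posSemidef_iff_eq_sum_vecMulVec.1 hM

theorem Matrix.PosSemidef.sq_dotProduct_mulVec_le {M : Matrix ι ι ℝ} (hM : M.PosSemidef)
    (x y : ι → ℝ) : (x ⬝ᵥ M *ᵥ y) ^ 2 ≤ (x ⬝ᵥ M *ᵥ x) * (y ⬝ᵥ M *ᵥ y) := by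
  obtain ⟨m, v, rfl⟩ := hM.exists_eq_sum_vecMulVec_self
  simp only [dotProduct_sum_vecMulVec_self_mulVec, dotProduct_comm (v _) x,
    dotProduct_comm y (v _), ← sq]
  exact sum_mul_sq_le_sq_mul_sq univ (fun i => x ⬝ᵥ v i) (fun i => v i ⬝ᵥ y)

theorem dotProduct_sum_smul_mulVec_self_le_iSup {κ : Type*} [Fintype κ]
    (G : κ → Matrix ι ι ℝ) {μ : κ → ℝ} (hμ0 : ∀ j, 0 ≤ μ j) (hμ1 : ∑ j, μ j = 1) (x : ι → ℝ) :
    x ⬝ᵥ (∑ j, μ j • G j) *ᵥ x ≤ ⨆ j, x ⬝ᵥ G j *ᵥ x := by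
  simp only [sum_mulVec, smul_mulVec, dotProduct_sum, dotProduct_smul, smul_eq_mul]
  calc ∑ j, μ j * (x ⬝ᵥ G j *ᵥ x) ≤ ∑ j, μ j * ⨆ j, x ⬝ᵥ G j *ᵥ x :=
        sum_le_sum fun j _ => mul_le_mul_of_nonneg_left
          (le_ciSup (f := fun j => x ⬝ᵥ G j *ᵥ x) (Finite.bddAbove_range _) j) (hμ0 j)
    _ = ⨆ j, x ⬝ᵥ G j *ᵥ x := by rw [← sum_mul, hμ1, one_mul]

theorem dotProduct_sum_smul_mulVec_le_sqrt_mul_sqrt {κ : Type*} [Fintype κ]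
    {G : κ → Matrix ι ι ℝ} (hG : ∀ j, (G j).PosSemidef) {μ : κ → ℝ} (hμ0 : ∀ j, 0 ≤ μ j)
    (hμ1 : ∑ j, μ j = 1) (x y : ι → ℝ) {b : ℝ} (hy : y ⬝ᵥ (∑ j, μ j • G j) *ᵥ y ≤ b) :
    x ⬝ᵥ (∑ j, μ j • G j) *ᵥ y ≤ √(⨆ j, x ⬝ᵥ G j *ᵥ x) * √b := by
  have hM : (∑ j, μ j • G j).PosSemidef := posSemidef_sum _ fun j _ => (hG j).smul (hμ0 j)
  have hx := dotProduct_sum_smul_mulVec_self_le_iSup G hμ0 hμ1 x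
  have hx0 := (hM.dotProduct_mulVec_nonneg x).trans hx
  rw [← sqrt_mul hx0]
  refine le_sqrt_of_sq_le ((hM.sq_dotProduct_mulVec_le x y).trans ?_)
  exact mul_le_mul hx hy (hM.dotProduct_mulVec_nonneg y) hx0

theorem sSup_mul_dotProduct_sum_smul_mulVec_le {κ : Type*} [Fintype κ]
    {G : κ → Matrix ι ι ℝ} (hG : ∀ j, (G j).PosSemidef) {b c : ℝ} (hc : 0 ≤ c)
    (x : ι → ℝ) :
    sSup {r : ℝ | ∃ μ : κ → ℝ, (∀ j, 0 ≤ μ j) ∧ (∑ j, μ j) = 1 ∧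
        ∃ α : ι → ℝ, α ⬝ᵥ ((∑ j, μ j • G j) *ᵥ α) ≤ b ∧
          r = c * (x ⬝ᵥ (∑ j, μ j • G j) *ᵥ α)} ≤
      c * (√(⨆ j, x ⬝ᵥ G j *ᵥ x) * √b) := by
  refine Real.sSup_le ?_ (by positivity)
  rintro _ ⟨μ, hμ0, hμ1, α, hα, rfl⟩
  exact mul_le_mul_of_nonneg_left
    (dotProduct_sum_smul_mulVec_le_sqrt_mul_sqrt hG hμ0 hμ1 x α hα) hc

variable [DecidableEq ι]

theorem expect_prod_bool (f : ι → Bool → ℝ) :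
    𝔼 s : ι → Bool, ∏ i, f i (s i) = ∏ i, (f i true + f i false) / 2 := by
  rw [Fintype.expect_eq_sum_div_card, ← Fintype.prod_sum, Fintype.card_fun, Fintype.card_bool,
    prod_div_distrib, prod_const, card_univ]
  simp

theorem expect_exp_dotProduct_signVec_le (a : ι → ℝ) (t : ℝ) :
    𝔼 s : ι → Bool, exp (t * (a ⬝ᵥ signVec s)) ≤ exp (t ^ 2 * (a ⬝ᵥ a) / 2) := by
  calc 𝔼 s : ι → Bool, exp (t * (a ⬝ᵥ signVec s))
      = ∏ i, (exp (t * a i * 1) + exp (t * a i * -1)) / 2 := by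
        refine (expect_congr rfl fun s _ => ?_).trans
          (expect_prod_bool fun i b => exp (t * a i * if b then 1 else -1))
        rw [dotProduct, mul_sum, exp_sum]
        exact prod_congr rfl fun i _ => by rw [← mul_assoc]; rfl
    _ ≤ ∏ i, exp ((t * a i) ^ 2 / 2) := by
        gcongr
        simpa [cosh_eq] using cosh_le_exp_half_sq (t * a i)
    _ = exp (t ^ 2 * (a ⬝ᵥ a) / 2) := by
        rw [← exp_sum]
        simp only [dotProduct, mul_sum, sum_div, mul_pow]
        exact congrArg exp (sum_congr rfl fun i _ => by ring)

/-- Khintchine's inequality for even moments. -/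
theorem expect_dotProduct_signVec_pow_le (a : ι → ℝ) (r : ℕ) :
    𝔼 s : ι → Bool, (a ⬝ᵥ signVec s) ^ (2 * r) ≤ 2 * (2 * r / exp 1) ^ r * (a ⬝ᵥ a) ^ r := by
  rcases (dotProduct_self_star_nonneg a).eq_or_lt with ha | ha
  · rw [star_trivial, eq_comm, dotProduct_self_eq_zero] at ha
    subst ha
    rcases r.eq_zero_or_pos with rfl | hr
    · norm_num
    · simp [hr.ne']
  · rw [star_trivial] at ha
    exact expect_pow_two_mul_le_of_expect_exp_le _ ha (expect_exp_dotProduct_signVec_le a) r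

theorem Matrix.PosSemidef.expect_signVec_dotProduct_mulVec_pow_le {M : Matrix ι ι ℝ}
    (hM : M.PosSemidef) (r : ℕ) :
    𝔼 s : ι → Bool, (signVec s ⬝ᵥ M *ᵥ signVec s) ^ r ≤
      2 * (2 * r / exp 1) ^ r * M.trace ^ r := by
  rcases r with _ | r
  · norm_num
  obtain ⟨m, v, rfl⟩ := hM.exists_eq_sum_vecMulVec_self
  set c : Fin m → ℝ := fun i => v i ⬝ᵥ v i
  have hc : ∀ i, 0 ≤ c i := fun i => sum_nonneg fun j _ => mul_self_nonneg (v i j)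
  set K : ℝ := 2 * (2 * ↑(r + 1) / exp 1) ^ (r + 1)
  simp only [dotProduct_sum_vecMulVec_self_mulVec, dotProduct_comm _ (v _), ← sq, trace_sum,
    trace_vecMulVec]
  calc 𝔼 s : ι → Bool, (∑ i, (v i ⬝ᵥ signVec s) ^ 2) ^ (r + 1)
      ≤ 𝔼 s : ι → Bool, (∑ i, c i) ^ r * ∑ i, ((v i ⬝ᵥ signVec s) ^ 2) ^ (r + 1) / c i ^ r :=
        expect_le_expect fun s _ => pow_sum_le_sum_pow_mul_sum_pow_div _ (fun i _ => hc i)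
          (fun i _ => sq_nonneg _) (fun i _ hi => by simp [dotProduct_self_eq_zero.1 hi]) r
    _ = (∑ i, c i) ^ r * ∑ i, (𝔼 s : ι → Bool, (v i ⬝ᵥ signVec s) ^ (2 * (r + 1))) / c i ^ r := by
        simp only [← mul_expect, expect_sum_comm, expect_div, pow_mul]
    _ ≤ (∑ i, c i) ^ r * ∑ i, K * c i ^ (r + 1) / c i ^ r := by
        refine mul_le_mul_of_nonneg_left (sum_le_sum fun i _ => ?_)
          (pow_nonneg (sum_nonneg fun i _ => hc i) r)
        exact div_le_div_of_nonneg_right (expect_dotProduct_signVec_pow_le (v i) (r + 1))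
          (pow_nonneg (hc i) r)
    _ = K * (∑ i, c i) ^ (r + 1) := by
        have : ∀ i, K * c i ^ (r + 1) / c i ^ r = K * c i := fun i => by
          rcases (hc i).eq_or_lt with h | h
          · simp [← h]
          · field_simp; ring
        simp only [this, ← mul_sum]
        ring

theorem expect_iSup_signVec_dotProduct_mulVec_le {κ : Type*} [Fintype κ]
    (hκ : 2 ≤ Fintype.card κ) {G : κ → Matrix ι ι ℝ} (hG : ∀ j, (G j).PosSemidef) {T : ℝ}
    (hT : ∀ j, (G j).trace ≤ T) :
    𝔼 s : ι → Bool, ⨆ j, signVec s ⬝ᵥ G j *ᵥ signVec s ≤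
      exp 1 ^ 2 * log (Fintype.card κ) * T := by
  have : Nonempty κ := Fintype.card_pos_iff.1 (by omega)
  have hT0 : 0 ≤ T := (hG (Classical.arbitrary κ)).trace_nonneg.trans (hT _)
  obtain ⟨r, hr, hrk⟩ := exists_mul_pow_le_pow_log hκ
  refine le_of_pow_le_pow_left₀ hr.ne' (by positivity) ?_
  calc (𝔼 s : ι → Bool, ⨆ j, signVec s ⬝ᵥ G j *ᵥ signVec s) ^ r
      ≤ ∑ j, 𝔼 s : ι → Bool, (signVec s ⬝ᵥ G j *ᵥ signVec s) ^ r :=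
        pow_expect_iSup_le (fun j s => (hG j).dotProduct_mulVec_nonneg _) r
    _ ≤ ∑ _j : κ, 2 * (2 * r / exp 1) ^ r * T ^ r :=
        sum_le_sum fun j _ => ((hG j).expect_signVec_dotProduct_mulVec_pow_le r).trans
          (by gcongr; exacts [(hG j).trace_nonneg, hT j])
    _ = Fintype.card κ * (2 * (2 * r / exp 1) ^ r) * T ^ r := by simp; ring
    _ ≤ (exp 1 ^ 2 * log (Fintype.card κ)) ^ r * T ^ r := by gcongr
    _ = _ := by ring

end

/-- Kernel-learning Rademacher bound (finite-sample form of Theorem 7.1 of the paper):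
`G_1, …, G_k` are `n × n` PSD Gram matrices with diagonal entries at most `B`, and
`𝒱 = {Gα : G = ∑ μ_j G_j, μ ≥ 0, ∑ μ_j = 1, αᵀGα ≤ 1/γ²}`.  The empirical Rademacher
complexity `E_ε [sup_{v ∈ 𝒱} (1/n) ∑ i ε_i v_i]` (expectation over uniform signs written as
a normalized sum over all sign patterns) is at most `e √(B ln k / (γ² n))`. -/
theorem stmt18 (n k : ℕ) (hn : 0 < n) (hk : 2 ≤ k) (B γ : ℝ) (hγ : 0 < γ)
    (G : Fin k → Matrix (Fin n) (Fin n) ℝ)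
    (hpsd : ∀ j, (G j).PosSemidef) (hdiag : ∀ (j : Fin k) (i : Fin n), G j i i ≤ B) :
    (1 / 2 ^ n : ℝ) * ∑ s : Fin n → Bool,
        sSup {r : ℝ | ∃ μ : Fin k → ℝ, (∀ j, 0 ≤ μ j) ∧ (∑ j, μ j) = 1 ∧
          ∃ α : Fin n → ℝ, α ⬝ᵥ ((∑ j, μ j • G j) *ᵥ α) ≤ 1 / γ ^ 2 ∧
            r = (1 / n : ℝ) * ∑ i, (if s i then (1 : ℝ) else -1) *
              ((∑ j, μ j • G j) *ᵥ α) i} ≤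
      Real.exp 1 * Real.sqrt (B * Real.log k / (γ ^ 2 * n)) := by
  set Q : (Fin n → Bool) → ℝ := fun s => ⨆ j, signVec s ⬝ᵥ G j *ᵥ signVec s
  have hQ : ∀ s, 0 ≤ Q s := fun s => iSup_nonneg fun j => (hpsd j).dotProduct_mulVec_nonneg _
  have htrace : ∀ j, (G j).trace ≤ n * B := fun j =>
    calc (G j).trace = ∑ i, G j i i := rfl
      _ ≤ ∑ _i : Fin n, B := sum_le_sum fun i _ => hdiag j i
      _ = n * B := by simp
  have hEQ : 𝔼 s, Q s ≤ exp 1 ^ 2 * log k * (n * B) := by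
    simpa using expect_iSup_signVec_dotProduct_mulVec_le (by simpa using hk) hpsd htrace
  rw [one_div_mul_eq_div, show (2 : ℝ) ^ n = Fintype.card (Fin n → Bool) by simp,
    ← Fintype.expect_eq_sum_div_card]
  calc 𝔼 s, sSup _
      ≤ 𝔼 s, (1 / n : ℝ) * (√(Q s) * √(1 / γ ^ 2)) := expect_le_expect fun s _ =>
        sSup_mul_dotProduct_sum_smul_mulVec_le hpsd (by positivity) (signVec s)
    _ = (𝔼 s, √(Q s)) / (γ * n) := by
        rw [one_div (γ ^ 2), sqrt_inv, sqrt_sq hγ.le, expect_div]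
        exact expect_congr rfl fun s _ => by field_simp
    _ ≤ √(exp 1 ^ 2 * log k * (n * B)) / (γ * n) := by
        gcongr
        exact (expect_sqrt_le_sqrt_expect hQ).trans (sqrt_le_sqrt hEQ)
    _ = exp 1 * √(B * log k / (γ ^ 2 * n)) := by
        have : exp 1 ^ 2 * log k * (n * B) = (exp 1 * (γ * n)) ^ 2 * (B * log k / (γ ^ 2 * n)) := by
          field_simp
        rw [this, sqrt_mul (by positivity), sqrt_sq (by positivity)]
        field_simp
end
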